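/- arXiv:1104.3773 — 3 statements merged into one kernel-verified Lean document; each statement's English description precedes it below -/
import Mathlib

section
/- Let β, γ be complex numbers. Suppose y is twice differentiable on an open set S ⊆ ℂ∖{0}, y(t) ∉ {0,1} for all t ∈ S, and y satisfies the first-order Riccati equation t y'(t) = (β-γ) y(t)² + (t - 1 - β + 2γ) y(t) + 1 - γ for all t ∈ S. Then y satisfies the fifth Painlevé equation PV with parameters A = (β-γ)²/2, B = -(γ-1)²/2, C = 2 - β, D = -1/2 on S. -/
/-- The fifth Painlevé equation PV with parameters (A,B,C,D) holds for `y` at the point `t`. -/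
noncomputable def PainleveV (A B C D : ℂ) (y : ℂ → ℂ) (t : ℂ) : Prop :=
  deriv (deriv y) t =
    (1 / (2 * y t) + 1 / (y t - 1)) * (deriv y t) ^ 2 - deriv y t / t
      + ((y t - 1) ^ 2 / t ^ 2) * (A * y t + B / y t)
      + C * y t / t + D * y t * (y t + 1) / (y t - 1)

set_option maxHeartbeats 2000000 in
theorem riccati_solves_PV
    (β γ : ℂ)
    (S : Set ℂ) (hS : IsOpen S) (hS0 : (0 : ℂ) ∉ S)
    (y : ℂ → ℂ)
    (hy_diff : ∀ t ∈ S, DifferentiableAt ℂ y t ∧ DifferentiableAt ℂ (deriv y) t)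
    (hy_val : ∀ t ∈ S, y t ≠ 0 ∧ y t ≠ 1)
    (hRic : ∀ t ∈ S, t * deriv y t =
      (β - γ) * (y t) ^ 2 + (t - 1 - β + 2 * γ) * y t + 1 - γ) :
    ∀ t ∈ S, PainleveV ((β - γ) ^ 2 / 2) (-((γ - 1) ^ 2) / 2)
      (2 - β) (-(1 / 2)) y t := by
  intro t ht
  obtain ⟨hy0, hy1⟩ := hy_val t ht
  obtain ⟨hyd, hyd'⟩ := hy_diff t ht
  have ht0 : t ≠ 0 := fun h => hS0 (h ▸ ht)
  have hy1' : y t - 1 ≠ 0 := sub_ne_zero.mpr hy1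
  have hdy : HasDerivAt y (deriv y t) t := hyd.hasDerivAt
  have hddy : HasDerivAt (deriv y) (deriv (deriv y) t) t := hyd'.hasDerivAt
  have hf : HasDerivAt (fun s => s * deriv y s)
      (1 * deriv y t + t * deriv (deriv y) t) t := (hasDerivAt_id t).mul hddy
  have h1 : HasDerivAt (fun s => (y s) ^ 2) (2 * y t * deriv y t) t := by
    simpa using hdy.fun_pow 2
  have h2 : HasDerivAt (fun s => s - 1 - β + 2 * γ) 1 t := by
    simpa using (((hasDerivAt_id t).sub_const 1).sub_const β).add_const (2 * γ)
  have hg : HasDerivAt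
      (fun s => (β - γ) * (y s) ^ 2 + (s - 1 - β + 2 * γ) * y s + 1 - γ)
      ((β - γ) * (2 * y t * deriv y t)
        + (1 * y t + (t - 1 - β + 2 * γ) * deriv y t)) t := by
    simpa using (((h1.const_mul (β - γ)).add (h2.mul hdy)).add_const (1 : ℂ)).sub_const γ
  have hev : (fun s => s * deriv y s) =ᶠ[nhds t]
      (fun s => (β - γ) * (y s) ^ 2 + (s - 1 - β + 2 * γ) * y s + 1 - γ) :=
    Filter.eventuallyEq_of_mem (hS.mem_nhds ht) (fun s hs => hRic s hs)
  have hkey : 1 * deriv y t + t * deriv (deriv y) t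
      = (β - γ) * (2 * y t * deriv y t)
        + (1 * y t + (t - 1 - β + 2 * γ) * deriv y t) :=
    hf.unique (hg.congr_of_eventuallyEq hev)
  have hR := hRic t ht
  have hy1eq : deriv y t
      = ((β - γ) * (y t) ^ 2 + (t - 1 - β + 2 * γ) * y t + 1 - γ) / t := by
    rw [eq_div_iff ht0]; linear_combination hR
  have hy2eq : deriv (deriv y) t
      = ((2 * (β - γ) * y t + t - 2 - β + 2 * γ)
          * ((β - γ) * (y t) ^ 2 + (t - 1 - β + 2 * γ) * y t + 1 - γ)
          + y t * t) / t ^ 2 := by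
    rw [eq_div_iff (pow_ne_zero 2 ht0)]
    linear_combination t * hkey + (2 * (β - γ) * y t + t - 2 - β + 2 * γ) * hR
  unfold PainleveV
  rw [hy2eq, hy1eq]
  have h2Y : (2:ℂ) * y t ≠ 0 := mul_ne_zero two_ne_zero hy0
  have hDne : 2 * y t * (y t - 1) * t ^ 2 ≠ 0 :=
    mul_ne_zero (mul_ne_zero h2Y hy1') (pow_ne_zero 2 ht0)
  set R := (β - γ) * (y t) ^ 2 + (t - 1 - β + 2 * γ) * y t + 1 - γ with hRdef
  set Y := y t with hYdef
  have e1 : (1 / (2 * Y) + 1 / (Y - 1)) * (R / t) ^ 2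
      = ((1 * (Y - 1) + 2 * Y * 1) * R ^ 2) / (2 * Y * (Y - 1) * t ^ 2) := by
    rw [div_add_div _ _ h2Y hy1', div_pow, div_mul_div_comm]
  have e2 : (R / t) / t = (2 * Y * (Y - 1) * R) / (2 * Y * (Y - 1) * t ^ 2) := by
    rw [div_div, div_eq_div_iff (mul_ne_zero ht0 ht0) hDne]; ring
  have e3 : ((Y - 1) ^ 2 / t ^ 2) * ((β - γ) ^ 2 / 2 * Y + (-((γ - 1) ^ 2) / 2) / Y)
      = ((Y - 1) ^ 3 * ((β - γ) ^ 2 * Y ^ 2 - (γ - 1) ^ 2)) / (2 * Y * (Y - 1) * t ^ 2) := by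
    rw [add_div' _ _ _ hy0, div_mul_div_comm,
      div_eq_div_iff (mul_ne_zero (pow_ne_zero 2 ht0) hy0) hDne]; ring
  have e4 : (2 - β) * Y / t
      = ((2 - β) * Y * 2 * Y * (Y - 1) * t) / (2 * Y * (Y - 1) * t ^ 2) := by
    rw [div_eq_div_iff ht0 hDne]; ring
  have e5 : (-(1 / 2)) * Y * (Y + 1) / (Y - 1)
      = (-(Y ^ 2 * (Y + 1) * t ^ 2)) / (2 * Y * (Y - 1) * t ^ 2) := by
    rw [div_eq_div_iff hy1' hDne]; ring
  have e0 : ((2 * (β - γ) * Y + t - 2 - β + 2 * γ) * R + Y * t) / t ^ 2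
      = (2 * Y * (Y - 1) * ((2 * (β - γ) * Y + t - 2 - β + 2 * γ) * R + Y * t))
        / (2 * Y * (Y - 1) * t ^ 2) := by
    rw [div_eq_div_iff (pow_ne_zero 2 ht0) hDne]; ring
  rw [e0, e1, e2, e3, e4, e5, div_sub_div_same, ← add_div, ← add_div,
    ← add_div, div_eq_div_iff hDne hDne]
  ring
end

section
/- Let β > 0, γ > 0 be real numbers with γ ≠ 1. Define the Kummer confluent hypergeometric function M(a,b,t) = ∑_{k=0}^∞ ((a)_k / (b)_k) · t^k / k!, where (x)_k = x(x+1)⋯(x+k-1) is the Pochhammer symbol. Define b₀(t) = (γ t / β) · M(γ+1, β+1, t) / M(γ, β, t) and v₀(t) = (γ - β + t - b₀(t)) · t / (γ - 1). Then for every t > 0 with M(γ, β, t) ≠ 0, v₀ is differentiable at t and satisfies t² v₀'(t) = (γ-1) v₀(t)² + t (2 - t + β - 2γ) v₀(t) + (γ-β) t². -/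
/-- The Kummer confluent hypergeometric function `M(a,b,t) = ∑ (a)_k/(b)_k · t^k/k!`,
where `(x)_k` is the (ascending) Pochhammer symbol. -/
noncomputable def KummerM (a b t : ℝ) : ℝ :=
  ∑' k : ℕ, ((ascPochhammer ℝ k).eval a / (ascPochhammer ℝ k).eval b)
    * t ^ k / (Nat.factorial k : ℝ)

open FormalMultilinearSeries Filter
open scoped Topology

noncomputable def kc (a b : ℝ) (k : ℕ) : ℝ :=
  (ascPochhammer ℝ k).eval a / ((ascPochhammer ℝ k).eval b * (Nat.factorial k : ℝ))

lemma pk_pos {x : ℝ} (hx : 0 < x) (k : ℕ) : 0 < (ascPochhammer ℝ k).eval x := by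
  induction k with
  | zero => simp [ascPochhammer_zero]
  | succ n ih =>
      rw [ascPochhammer_succ_eval]
      have : (0:ℝ) < x + n := by positivity
      exact mul_pos ih this

lemma pk_left (x : ℝ) (k : ℕ) :
    (ascPochhammer ℝ (k+1)).eval x = x * (ascPochhammer ℝ k).eval (x+1) := by
  rw [ascPochhammer_succ_left]
  simp [Polynomial.eval_mul, Polynomial.eval_comp]

lemma kc_pos {a b : ℝ} (ha : 0 < a) (hb : 0 < b) (k : ℕ) : 0 < kc a b k := by
  have h1 := pk_pos ha k
  have h2 := pk_pos hb k
  have h3 : (0:ℝ) < (Nat.factorial k : ℝ) := by positivity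
  exact div_pos h1 (mul_pos h2 h3)

lemma kc_zero (a b : ℝ) : kc a b 0 = 1 := by
  simp [kc, ascPochhammer_zero]

lemma kc_succ {b : ℝ} (hb : 0 < b) (a : ℝ) (k : ℕ) :
    kc a b (k+1) = kc a b k * ((a+k)/((b+k)*(k+1))) := by
  have hPb := pk_pos hb k
  have hbk : (0:ℝ) < b + k := by positivity
  have hfac : (0:ℝ) < (Nat.factorial k : ℝ) := by positivity
  rw [kc, kc, ascPochhammer_succ_eval, ascPochhammer_succ_eval, Nat.factorial_succ]
  push_cast
  field_simp
  try simp

/-- derivative coefficient identity -/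
lemma kc_deriv_coeff {a b : ℝ} (ha : 0 < a) (hb : 0 < b) (k : ℕ) :
    (a/b) * kc (a+1) (b+1) k = ((k:ℝ)+1) * kc a b (k+1) := by
  have hQ := pk_pos (by linarith : (0:ℝ) < a + 1) k
  have hR := pk_pos (by linarith : (0:ℝ) < b + 1) k
  have hfac : (0:ℝ) < (Nat.factorial k : ℝ) := by positivity
  rw [kc, kc, pk_left, pk_left, Nat.factorial_succ]
  push_cast
  field_simp
  try simp

/-- recurrence coefficient identity for the Kummer ODE -/
lemma kc_ode_coeff {a b : ℝ} (ha : 0 < a) (hb : 0 < b) (k : ℕ) :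
    ((k:ℝ)+1) * kc (a+1) (b+1) (k+1)
      = kc (a+1) (b+1) k - b * kc (a+1) (b+1) (k+1) + b * kc a b (k+1) := by
  have hQ := pk_pos (by linarith : (0:ℝ) < a + 1) k
  have hR := pk_pos (by linarith : (0:ℝ) < b + 1) k
  have hfac : (0:ℝ) < (Nat.factorial k : ℝ) := by positivity
  have hb1k : (0:ℝ) < b + 1 + k := by positivity
  rw [kc, kc, kc, ascPochhammer_succ_eval, ascPochhammer_succ_eval, pk_left a, pk_left b,
    Nat.factorial_succ]
  push_cast
  field_simp
  ring_nf
  try simp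

noncomputable def kp (a b : ℝ) : FormalMultilinearSeries ℝ ℝ ℝ :=
  FormalMultilinearSeries.ofScalars ℝ (kc a b)

lemma kc_ratio_tendsto {a b : ℝ} (ha : 0 < a) (hb : 0 < b) :
    Tendsto (fun k : ℕ => ‖kc a b (k+1)‖ / ‖kc a b k‖) atTop (𝓝 0) := by
  have key : ∀ k : ℕ, ‖kc a b (k+1)‖ / ‖kc a b k‖ = (a+k)/((b+k)*(k+1)) := by
    intro k
    have h1 := kc_pos ha hb k
    rw [kc_succ hb a k, norm_mul, Real.norm_eq_abs, Real.norm_eq_abs,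
      abs_of_pos h1, mul_comm, mul_div_assoc, div_self h1.ne', mul_one,
      abs_of_pos (by positivity)]
  rw [show (fun k : ℕ => ‖kc a b (k+1)‖ / ‖kc a b k‖)
      = fun k : ℕ => (a+k)/((b+k)*(k+1)) from funext key]
  have hbound : Tendsto (fun k : ℕ => (a+1)/(b+k)) atTop (𝓝 0) := by
    apply Tendsto.div_atTop tendsto_const_nhds
    exact tendsto_atTop_add_const_left _ b tendsto_natCast_atTop_atTop
  apply squeeze_zero (fun k => by positivity) _ hbound
  intro k
  have h2 : (0:ℝ) < b + k := by positivity
  have h3 : (0:ℝ) < (k:ℝ) + 1 := by positivity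
  rw [div_le_div_iff₀ (by positivity) h2]
  have : a + k ≤ (a+1)*((k:ℝ)+1) := by nlinarith
  nlinarith

lemma kp_radius {a b : ℝ} (ha : 0 < a) (hb : 0 < b) : (kp a b).radius = ⊤ := by
  apply FormalMultilinearSeries.ofScalars_radius_eq_top_of_tendsto
  · exact Filter.Eventually.of_forall fun k => (kc_pos ha hb k).ne'
  · exact kc_ratio_tendsto ha hb

lemma kummer_eq_sum {a b : ℝ} : KummerM a b = (kp a b).sum := by
  funext t
  rw [KummerM, FormalMultilinearSeries.sum]
  apply tsum_congr
  intro k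
  rw [kp, FormalMultilinearSeries.ofScalars_apply_eq, smul_eq_mul, kc]
  ring

lemma kummer_hasSum {a b : ℝ} (ha : 0 < a) (hb : 0 < b) (t : ℝ) :
    HasSum (fun k => kc a b k * t ^ k) (KummerM a b t) := by
  have h := (kp a b).hasSum (x := t) (by rw [kp_radius ha hb]; exact EMetric.mem_ball.mpr (edist_lt_top t 0))
  rw [← kummer_eq_sum] at h
  convert h using 2 with k
  · rfl
  rw [kp, FormalMultilinearSeries.ofScalars_apply_eq, smul_eq_mul]

lemma kummer_hasDerivAt {a b : ℝ} (ha : 0 < a) (hb : 0 < b) {t : ℝ} (ht : t ≠ 0) :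
    HasDerivAt (KummerM a b) (a / b * KummerM (a+1) (b+1) t) t := by
  have hball : HasFPowerSeriesOnBall (kp a b).sum (kp a b) 0 ⊤ := by
    have h := (kp a b).hasFPowerSeriesOnBall
      (by rw [kp_radius ha hb]; exact ENNReal.zero_lt_top)
    rwa [kp_radius ha hb] at h
  have hmem : (t : ℝ) ∈ EMetric.ball (0:ℝ) ⊤ := EMetric.mem_ball.mpr (edist_lt_top t 0)
  have hdiff : DifferentiableAt ℝ (kp a b).sum t :=
    (hball.analyticAt_of_mem hmem).differentiableAt
  have hD : HasDerivAt (kp a b).sum (deriv (kp a b).sum t) t := hdiff.hasDerivAt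
  have hs := hball.fderiv.hasSum (y := t) hmem
  have hs2 := (ContinuousLinearMap.apply ℝ ℝ t).hasSum hs
  have hterm : (fun n : ℕ => (ContinuousLinearMap.apply ℝ ℝ t)
        (((kp a b).derivSeries n) fun _ => t))
      = fun n : ℕ => ((n:ℝ)+1) * (kc a b (n+1) * t^(n+1)) := by
    funext n
    rw [ContinuousLinearMap.apply_apply, FormalMultilinearSeries.derivSeries_apply_diag]
    rw [kp, FormalMultilinearSeries.ofScalars_apply_eq, smul_eq_mul, nsmul_eq_mul]
    push_cast
    ring
  rw [hterm] at hs2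
  have hS1 : HasSum (fun k : ℕ => ((k:ℝ)+1) * (kc a b (k+1) * t^(k+1)))
      (t * (a / b * KummerM (a+1) (b+1) t)) := by
    have h := ((kummer_hasSum (by linarith : (0:ℝ) < a+1)
      (by linarith : (0:ℝ) < b+1) t).mul_left (a/b)).mul_left t
    convert h using 2 with k
    · rfl
    have hc := kc_deriv_coeff ha hb k
    linear_combination (-(t ^ k * t)) * hc
  have hval : (ContinuousLinearMap.apply ℝ ℝ t) (fderiv ℝ (kp a b).sum (0 + t))
      = t * deriv (kp a b).sum t := by
    rw [zero_add, ContinuousLinearMap.apply_apply, deriv]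
    have h := (fderiv ℝ (kp a b).sum t).map_smul t (1:ℝ)
    rw [smul_eq_mul, mul_one] at h
    rw [h, smul_eq_mul]
  rw [hval] at hs2
  have heq : t * deriv (kp a b).sum t = t * (a / b * KummerM (a+1) (b+1) t) :=
    hs2.unique hS1
  have hderiv : deriv (kp a b).sum t = a / b * KummerM (a+1) (b+1) t :=
    mul_left_cancel₀ ht heq
  rw [hderiv] at hD
  rw [kummer_eq_sum]
  exact hD

lemma kummer_ode {a b : ℝ} (ha : 0 < a) (hb : 0 < b) (t : ℝ) :
    t * ((a+1)/(b+1)) * KummerM (a+2) (b+2) t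
      = (t - b) * KummerM (a+1) (b+1) t + b * KummerM a b t := by
  have ha1 : (0:ℝ) < a + 1 := by linarith
  have hb1 : (0:ℝ) < b + 1 := by linarith
  have ha2 : (0:ℝ) < a + 2 := by linarith
  have hb2 : (0:ℝ) < b + 2 := by linarith
  have h2 := kummer_hasSum ha2 hb2 t
  have h1 := kummer_hasSum ha1 hb1 t
  have h0 := kummer_hasSum ha hb t
  have hL : HasSum (fun k : ℕ => ((k:ℝ)+1) * kc (a+1) (b+1) (k+1) * t^(k+1))
      (t * ((a+1)/(b+1)) * KummerM (a+2) (b+2) t) := by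
    convert h2.mul_left (t * ((a+1)/(b+1))) using 2 with k
    · rfl
    have hc := kc_deriv_coeff ha1 hb1 k
    rw [show a+1+1 = a+2 by ring, show b+1+1 = b+2 by ring] at hc
    linear_combination (-(t ^ k * t)) * hc
  have A := h1.mul_left t
  have B' := (hasSum_nat_add_iff' (f := fun k : ℕ => -b * (kc (a+1) (b+1) k * t^k)) 1).mpr
    (h1.mul_left (-b))
  have C' := (hasSum_nat_add_iff' (f := fun k : ℕ => b * (kc a b k * t^k)) 1).mpr
    (h0.mul_left b)
  have hR : HasSum (fun k : ℕ => ((k:ℝ)+1) * kc (a+1) (b+1) (k+1) * t^(k+1))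
      ((t * KummerM (a+1) (b+1) t
        + (-b * KummerM (a+1) (b+1) t - ∑ i ∈ Finset.range 1, -b * (kc (a+1) (b+1) i * t^i)))
        + (b * KummerM a b t - ∑ i ∈ Finset.range 1, b * (kc a b i * t^i))) := by
    convert (A.add B').add C' using 2 with k
    · rfl
    have hc := kc_ode_coeff ha hb k
    linear_combination (t ^ k * t) * hc
  have key := hL.unique hR
  simp only [Finset.sum_range_one, kc_zero, pow_zero, mul_one] at key
  linear_combination key

theorem initial_condition_lattice_N
    (β γ : ℝ) (hβ : 0 < β) (hγ : 0 < γ) (hγ1 : γ ≠ 1)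
    (b₀ v₀ : ℝ → ℝ)
    (hb₀ : ∀ t, b₀ t = (γ * t / β) * KummerM (γ + 1) (β + 1) t / KummerM γ β t)
    (hv₀ : ∀ t, v₀ t = (γ - β + t - b₀ t) * t / (γ - 1)) :
    ∀ t > (0 : ℝ), KummerM γ β t ≠ 0 →
      DifferentiableAt ℝ v₀ t ∧
      t ^ 2 * deriv v₀ t =
        (γ - 1) * (v₀ t) ^ 2 + t * (2 - t + β - 2 * γ) * v₀ t + (γ - β) * t ^ 2 := by
  intro t ht hN
  have htne : t ≠ 0 := ht.ne'
  have hγ1' : γ - 1 ≠ 0 := sub_ne_zero_of_ne hγ1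
  have hβ1 : (0:ℝ) < β + 1 := by linarith
  have hγp1 : (0:ℝ) < γ + 1 := by linarith
  have HM : HasDerivAt (KummerM γ β) (γ / β * KummerM (γ+1) (β+1) t) t :=
    kummer_hasDerivAt hγ hβ htne
  have HM1 : HasDerivAt (KummerM (γ+1) (β+1))
      ((γ+1) / (β+1) * KummerM (γ+2) (β+2) t) t := by
    have h := kummer_hasDerivAt hγp1 hβ1 htne
    rwa [show γ+1+1 = γ+2 by ring, show β+1+1 = β+2 by ring] at h
  have ODE := kummer_ode hγ hβ t
  have hN2 : (γ+1)/(β+1) * KummerM (γ+2) (β+2) t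
      = ((t - β) * KummerM (γ+1) (β+1) t + β * KummerM γ β t) / t := by
    rw [eq_div_iff htne]
    linear_combination ODE
  have hvfun : v₀ = fun s => (γ - β + s
      - (γ * s / β) * KummerM (γ + 1) (β + 1) s / KummerM γ β s) * s / (γ - 1) :=
    funext fun s => by rw [hv₀ s, hb₀ s]
  have hlin : HasDerivAt (fun s : ℝ => γ * s / β) (γ / β) t := by
    simpa using ((hasDerivAt_id t).const_mul γ).div_const β
  have hprod := hlin.mul HM1
  have hq := hprod.div HM hN
  have hs1 : HasDerivAt (fun s : ℝ => γ - β + s) 1 t := by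
    simpa using (hasDerivAt_id t).const_add (γ - β)
  have hs2 := hs1.sub hq
  have hs3 := hs2.mul (hasDerivAt_id' (x := t))
  have hs4 := hs3.div_const (γ - 1)
  rw [hvfun]
  refine ⟨hs4.differentiableAt, ?_⟩
  rw [(show HasDerivAt (fun s => (γ - β + s - (γ * s / β) * KummerM (γ + 1) (β + 1) s / KummerM γ β s) * s / (γ - 1)) _ t from hs4).deriv, hN2]
  simp only [Pi.mul_apply, Pi.sub_apply, Pi.div_apply]
  field_simp
  ring
end

section
/- Let β, γ, τ be real numbers with 0 < β < 2, β ≠ 1, γ > max(0, β-1), γ ≠ 1 and τ > 0. Define the Kummer confluent hypergeometric function M(a,b,t) = ∑_{k=0}^∞ ((a)_k / (b)_k) · t^k / k! with (x)_k the Pochhammer symbol, and for t > 0 set m₀(t) = M(γ, β, t), m₁(t) = (γ t / β) M(γ+1, β+1, t), m̂₀(t) = (Γ(β) Γ(γ-β+1) / (Γ(γ) Γ(2-β))) t^{1-β} M(γ-β+1, 2-β, t), m̂₁(t) = (Γ(β) Γ(γ-β+1) / (Γ(γ) Γ(1-β))) t^{1-β} M(γ-β+1, 1-β, t), where Γ is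 the Gamma function. Define b̃₀(t) = (m₁(t) + τ m̂₁(t)) / (m₀(t) + τ m̂₀(t)) and ṽ₀(t) = (γ - β + t - b̃₀(t)) · t / (γ - 1). Then for every t > 0 with m₀(t) + τ m̂₀(t) ≠ 0, ṽ₀ is differentiable at t and satisfies t² ṽ₀'(t) = (γ-1) ṽ₀(t)² + t (2 - t + β - 2γ) ṽ₀(t) + (γ-β) t². -/
open Filter Polynomial

namespace KummerAux

/-- Coefficient of `t^n` in the Kummer series. -/
noncomputable def kc (a b : ℝ) (n : ℕ) : ℝ :=
  (ascPochhammer ℝ n).eval a / ((ascPochhammer ℝ n).eval b * (Nat.factorial n : ℝ))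

lemma pe_ne_zero {x : ℝ} (hx : ∀ n : ℕ, x + (n : ℝ) ≠ 0) (n : ℕ) :
    (ascPochhammer ℝ n).eval x ≠ 0 := by
  induction n with
  | zero => simp
  | succ n ih =>
    rw [ascPochhammer_succ_eval]
    exact mul_ne_zero ih (hx n)

lemma pe_shift_mul (x : ℝ) (n : ℕ) :
    x * (ascPochhammer ℝ n).eval (x + 1) = (ascPochhammer ℝ n).eval x * (x + n) := by
  induction n with
  | zero => simp
  | succ n ih =>
    rw [ascPochhammer_succ_eval, ascPochhammer_succ_eval]
    push_cast
    linear_combination (x + 1 + (n : ℝ)) * ih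

lemma pe_shift {x : ℝ} (hx : x ≠ 0) (n : ℕ) :
    (ascPochhammer ℝ n).eval (x + 1) = (ascPochhammer ℝ n).eval x * (x + n) / x := by
  rw [eq_div_iff hx]
  linear_combination pe_shift_mul x n

lemma kc_zero (a b : ℝ) : kc a b 0 = 1 := by simp [kc]

lemma kc_succ {a b : ℝ} (hb : ∀ n : ℕ, b + (n : ℝ) ≠ 0) (n : ℕ) :
    kc a b (n + 1) = kc a b n * ((a + n) / ((b + n) * (n + 1))) := by
  have h1 : (ascPochhammer ℝ n).eval b ≠ 0 := pe_ne_zero hb n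
  have h2 : (b + (n : ℝ)) ≠ 0 := hb n
  have h3 : ((Nat.factorial n : ℕ) : ℝ) ≠ 0 := Nat.cast_ne_zero.2 n.factorial_ne_zero
  have h4 : ((n : ℝ) + 1) ≠ 0 := by positivity
  rw [kc, kc, ascPochhammer_succ_eval, ascPochhammer_succ_eval, Nat.factorial_succ]
  push_cast
  rw [div_mul_div_comm, div_eq_div_iff (by exact mul_ne_zero (mul_ne_zero h1 h2) (by positivity))
    (mul_ne_zero (mul_ne_zero h1 h3) (mul_ne_zero h2 h4))]
  ring

lemma kc_ne_zero {a b : ℝ} (ha : ∀ n : ℕ, a + (n : ℝ) ≠ 0)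
    (hb : ∀ n : ℕ, b + (n : ℝ) ≠ 0) (n : ℕ) : kc a b n ≠ 0 :=
  div_ne_zero (pe_ne_zero ha n)
    (mul_ne_zero (pe_ne_zero hb n) (Nat.cast_ne_zero.2 n.factorial_ne_zero))


lemma summable_kc {a b : ℝ} (ha : ∀ n : ℕ, a + (n : ℝ) ≠ 0)
    (hb : ∀ n : ℕ, b + (n : ℝ) ≠ 0) {R : ℝ} (hR : 1 ≤ R) :
    Summable (fun n : ℕ => |kc a b n| * ((n : ℝ) + 1) * R ^ n) := by
  have hR0 : (0:ℝ) < R := lt_of_lt_of_le one_pos hR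
  apply summable_of_ratio_norm_eventually_le (r := 1/2) (by norm_num)
  have hev : ∀ᶠ n : ℕ in atTop, (|b| + 4 * R * (|a| + 1) : ℝ) ≤ (n:ℝ) :=
    tendsto_natCast_atTop_atTop.eventually_ge_atTop _
  filter_upwards [hev] with n hn
  have hkc : kc a b n ≠ 0 := kc_ne_zero ha hb n
  have hbn : 4 * R * (|a| + 1) ≤ b + n := by
    have := neg_abs_le b; linarith
  have hbn0 : (0:ℝ) < b + n := by nlinarith [abs_nonneg a]
  have hrec : |kc a b (n+1)| = |kc a b n| * (|a + (n:ℝ)| / ((b + n) * ((n:ℝ) + 1))) := by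
    rw [kc_succ hb n, abs_mul, abs_div,
      abs_of_pos (by positivity : (0:ℝ) < (b+(n:ℝ))*((n:ℝ)+1))]
  have h1 : |a + (n:ℝ)| ≤ (|a| + 1) * ((n:ℝ) + 1) := by
    have h2 : |a + (n:ℝ)| ≤ |a| + (n:ℝ) := by
      simpa [abs_of_nonneg (by positivity : (0:ℝ) ≤ (n:ℝ))] using abs_add_le a (n:ℝ)
    nlinarith [abs_nonneg a, (Nat.cast_nonneg n : (0:ℝ) ≤ n)]
  have hfrac : |a + (n:ℝ)| / ((b+(n:ℝ))*((n:ℝ)+1)) * ((((n:ℝ)+2)) * R) ≤ 1/2 * ((n:ℝ)+1) := by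
    rw [div_mul_eq_mul_div, div_le_iff₀ (by positivity)]
    have e1 : |a + (n:ℝ)| * (((n:ℝ)+2)*R) ≤ ((|a|+1)*((n:ℝ)+1)) * (((n:ℝ)+2)*R) :=
      mul_le_mul_of_nonneg_right h1 (by positivity)
    have e2 : ((|a|+1)*((n:ℝ)+1)) * (((n:ℝ)+2)*R) ≤ ((|a|+1)*((n:ℝ)+1)) * ((2*((n:ℝ)+1))*R) := by
      have h3 : ((n:ℝ)+2) ≤ 2*((n:ℝ)+1) := by linarith [(Nat.cast_nonneg n : (0:ℝ) ≤ n)]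
      exact mul_le_mul_of_nonneg_left (mul_le_mul_of_nonneg_right h3 hR0.le) (by positivity)
    have e4 := mul_le_mul_of_nonneg_right hbn (by positivity : (0:ℝ) ≤ ((n:ℝ)+1)*((n:ℝ)+1))
    nlinarith [e1, e2, e4]
  have hc0 : (0:ℝ) ≤ |kc a b n| := abs_nonneg _
  have hRn : (0:ℝ) < R ^ n := by positivity
  have hmain := mul_le_mul_of_nonneg_left hfrac (mul_nonneg hc0 hRn.le)
  have hA : (0:ℝ) ≤ |kc a b (n+1)| * (((n+1 : ℕ):ℝ) + 1) * R ^ (n+1) := by positivity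
  have hB : (0:ℝ) ≤ |kc a b n| * ((n:ℝ) + 1) * R ^ n := by positivity
  rw [Real.norm_of_nonneg hA, Real.norm_of_nonneg hB, hrec]
  push_cast
  rw [pow_succ]
  calc |kc a b n| * (|a + (n:ℝ)| / ((b + (n:ℝ)) * ((n:ℝ) + 1))) * ((n:ℝ) + 1 + 1) * (R^n * R)
      = |kc a b n| * R^n * (|a + (n:ℝ)| / ((b+(n:ℝ))*((n:ℝ)+1)) * ((((n:ℝ)+2)) * R)) := by ring
    _ ≤ |kc a b n| * R^n * (1/2 * ((n:ℝ)+1)) := hmain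
    _ = 1/2 * (|kc a b n| * ((n:ℝ)+1) * R^n) := by ring

lemma hasDerivAt_series (c : ℕ → ℝ) (t : ℝ)
    (hc : ∀ R : ℝ, 1 ≤ R → Summable (fun n : ℕ => |c n| * ((n:ℝ) + 1) * R ^ n)) :
    HasDerivAt (fun x => ∑' n : ℕ, c n * x ^ n)
      (∑' n : ℕ, ((n:ℝ) + 1) * c (n + 1) * t ^ n) t := by
  set R : ℝ := |t| + 1 with hRdef
  have hR1 : (1:ℝ) ≤ R := le_add_of_nonneg_left (abs_nonneg t)
  have hR0 : (0:ℝ) < R := lt_of_lt_of_le one_pos hR1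
  have hu := hc R hR1
  have hbound : ∀ (n : ℕ) (y : ℝ), y ∈ Metric.ball (0:ℝ) R →
      ‖c n * ((n:ℝ) * y ^ (n - 1))‖ ≤ |c n| * ((n:ℝ)+1) * R^n := by
    intro n y hy
    have hyR : |y| ≤ R := by
      have : dist y 0 < R := hy
      rw [Real.dist_eq, sub_zero] at this
      exact this.le
    rw [Real.norm_eq_abs, abs_mul]
    cases n with
    | zero => simpa using by positivity
    | succ m =>
      have hym : |y| ^ m ≤ R ^ m := pow_le_pow_left₀ (abs_nonneg y) hyR m
      have hRm : R ^ m ≤ R ^ (m+1) := pow_le_pow_right₀ hR1 (Nat.le_succ m)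
      have habs : |((m:ℝ)+1) * y ^ m| = ((m:ℝ)+1) * |y|^m := by
        rw [abs_mul, abs_pow, abs_of_nonneg (by positivity : (0:ℝ) ≤ (m:ℝ)+1)]
      push_cast
      try simp only [Nat.add_sub_cancel]
      rw [habs]
      have : ((m:ℝ)+1) * |y|^m ≤ ((m:ℝ)+1+1) * R^(m+1) := by nlinarith [abs_nonneg y, pow_nonneg (abs_nonneg y) m]
      nlinarith [abs_nonneg (c (m+1))]
  have hsum0 : Summable (fun n : ℕ => c n * (0:ℝ) ^ n) := by
    apply Summable.of_norm_bounded hu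
    intro n
    rw [Real.norm_eq_abs, abs_mul, abs_pow, abs_zero]
    cases n with
    | zero => simp
    | succ m => simp [abs_nonneg]; positivity
  have htball : t ∈ Metric.ball (0:ℝ) R := by
    have : dist t 0 < R := by rw [Real.dist_eq, sub_zero]; simp [hRdef]
    exact this
  have hder := hasDerivAt_tsum_of_isPreconnected hu Metric.isOpen_ball
    ((convex_ball (0:ℝ) R).isPreconnected)
    (g := fun n x => c n * x ^ n) (g' := fun n x => c n * ((n:ℝ) * x ^ (n-1)))
    (fun n y _ => (hasDerivAt_pow n y).const_mul (c n))
    hbound (Metric.mem_ball_self hR0) hsum0 htball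
  have hs : Summable (fun n : ℕ => c n * ((n:ℝ) * t^(n-1))) :=
    Summable.of_norm_bounded hu (fun n => hbound n t htball)
  refine hder.congr_deriv ?_
  rw [Summable.tsum_eq_zero_add hs]
  simp only [Nat.cast_zero, zero_mul, mul_zero, zero_add, Nat.cast_succ, Nat.add_sub_cancel]
  exact tsum_congr fun n => by push_cast; ring

lemma shift_ne {a : ℝ} (ha : ∀ n : ℕ, a + (n : ℝ) ≠ 0) :
    ∀ n : ℕ, (a + 1) + (n : ℝ) ≠ 0 := by
  intro n
  have h := ha (n + 1)
  push_cast at h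
  intro hc
  apply h
  linarith

lemma kummer_eq (a b t : ℝ) : KummerM a b t = ∑' n : ℕ, kc a b n * t ^ n :=
  tsum_congr fun n => by rw [kc]; ring

/-- Summability of a Kummer-type series at any point, with any scalar weight. -/
lemma summable_kct {a b : ℝ} (ha : ∀ n : ℕ, a + (n : ℝ) ≠ 0)
    (hb : ∀ n : ℕ, b + (n : ℝ) ≠ 0) (t : ℝ) :
    Summable (fun n : ℕ => kc a b n * t ^ n) := by
  have hR1 : (1:ℝ) ≤ |t| + 1 := le_add_of_nonneg_left (abs_nonneg t)
  apply Summable.of_norm_bounded (summable_kc ha hb hR1)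
  intro n
  rw [Real.norm_eq_abs, abs_mul, abs_pow]
  have h1 : |t| ^ n ≤ (|t| + 1) ^ n := pow_le_pow_left₀ (abs_nonneg t) (by linarith) n
  have h2 : (0:ℝ) ≤ |kc a b n| := abs_nonneg _
  have h3 : (0:ℝ) ≤ (|t|+1)^n := pow_nonneg (by positivity) n
  calc |kc a b n| * |t| ^ n ≤ |kc a b n| * (|t|+1) ^ n := mul_le_mul_of_nonneg_left h1 h2
    _ ≤ |kc a b n| * ((n:ℝ)+1) * (|t|+1) ^ n := by nlinarith [mul_nonneg (mul_nonneg h2 (Nat.cast_nonneg n : (0:ℝ) ≤ n)) h3]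

lemma hasDerivAt_kummerM {a b : ℝ} (ha : ∀ n : ℕ, a + (n : ℝ) ≠ 0)
    (hb : ∀ n : ℕ, b + (n : ℝ) ≠ 0) (t : ℝ) :
    HasDerivAt (fun x => KummerM a b x) (a / b * KummerM (a+1) (b+1) t) t := by
  have ha0 : a ≠ 0 := by simpa using ha 0
  have hb0 : b ≠ 0 := by simpa using hb 0
  have h := hasDerivAt_series (kc a b) t (fun R hR => summable_kc ha hb hR)
  have hfun : (fun x => KummerM a b x) = fun x => ∑' n : ℕ, kc a b n * x ^ n :=
    funext fun x => kummer_eq a b x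
  rw [hfun]
  convert h using 1
  rw [kummer_eq, ← tsum_mul_left]
  refine tsum_congr fun n => ?_
  have key : a / b * kc (a+1) (b+1) n = ((n:ℝ) + 1) * kc a b (n+1) := by
    rw [kc, kc, pe_shift ha0 n, pe_shift hb0 n, ascPochhammer_succ_eval,
      ascPochhammer_succ_eval, Nat.factorial_succ]
    have h1 := pe_ne_zero ha n
    have h2 := pe_ne_zero hb n
    have h3 : ((Nat.factorial n : ℕ) : ℝ) ≠ 0 := Nat.cast_ne_zero.2 n.factorial_ne_zero
    have h4 : ((n:ℝ) + 1) ≠ 0 := by positivity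
    have h5 := ha n
    have h6 := hb n
    push_cast
    field_simp
  linear_combination (t ^ n) * key

/-- Shifting a power series by one index against multiplication by `t`. -/
lemma tsum_shift {p q : ℕ → ℝ} {t : ℝ} (hp : Summable (fun n : ℕ => p n * t ^ n))
    (h0 : p 0 = 0) (hpq : ∀ n, p (n + 1) = q n) :
    ∑' n : ℕ, p n * t ^ n = t * ∑' n : ℕ, q n * t ^ n := by
  rw [Summable.tsum_eq_zero_add hp, h0, ← tsum_mul_left]
  rw [zero_mul, zero_add]
  exact tsum_congr fun n => by rw [hpq]; ring

lemma kc_zero' (a b : ℝ) : kc a b 0 = 1 := by simp [kc]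

lemma shift2_ne {a : ℝ} (ha : ∀ n : ℕ, a + (n : ℝ) ≠ 0) :
    ∀ n : ℕ, (a + 2) + (n : ℝ) ≠ 0 := by
  intro n
  have h := shift_ne (shift_ne ha) n
  intro hc; apply h; linarith

/-- Contiguous relation: the Kummer ODE for the first solution, in integrated form. -/
lemma ode_id {a b : ℝ} (ha : ∀ n : ℕ, a + (n : ℝ) ≠ 0) (hb : ∀ n : ℕ, b + (n : ℝ) ≠ 0)
    (t : ℝ) :
    ((a+1)/(b+1)) * (t * KummerM (a+2) (b+2) t) =
      (t - b) * KummerM (a+1) (b+1) t + b * KummerM a b t := by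
  have ha0 : a ≠ 0 := by simpa using ha 0
  have hb0 : b ≠ 0 := by simpa using hb 0
  have ha1 : a + 1 ≠ 0 := by simpa using shift_ne ha 0
  have hb1 : b + 1 ≠ 0 := by simpa using shift_ne hb 0
  have hse := summable_kct ha hb t
  have hsd := summable_kct (shift_ne ha) (shift_ne hb) t
  have hsf := summable_kct (shift2_ne ha) (shift2_ne hb) t
  have key : ∀ n : ℕ, (b * kc a b (n+1) - b * kc (a+1) (b+1) (n+1)) =
      ((a+1)/(b+1)) * kc (a+2) (b+2) n - kc (a+1) (b+1) n := by
    intro n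
    have h1 := pe_ne_zero ha n
    have h2 := pe_ne_zero hb n
    have h3 : ((Nat.factorial n : ℕ) : ℝ) ≠ 0 := Nat.cast_ne_zero.2 n.factorial_ne_zero
    have h4 : ((n:ℝ) + 1) ≠ 0 := by positivity
    have h5 := ha n
    have h6 := hb n
    have h7 := shift_ne ha n
    have h8 := shift_ne hb n
    simp only [kc, ascPochhammer_succ_eval, Nat.factorial_succ]
    rw [show (a:ℝ)+2 = (a+1)+1 by ring, show (b:ℝ)+2 = (b+1)+1 by ring,
      pe_shift ha1 n, pe_shift hb1 n, pe_shift ha0 n, pe_shift hb0 n]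
    push_cast
    field_simp
    ring
  have h1 : b * KummerM a b t - b * KummerM (a+1) (b+1) t =
      ∑' n : ℕ, (b * kc a b n - b * kc (a+1) (b+1) n) * t ^ n := by
    rw [kummer_eq a b, kummer_eq (a+1) (b+1), ← tsum_mul_left, ← tsum_mul_left,
      ← Summable.tsum_sub (hse.mul_left b) (hsd.mul_left b)]
    exact tsum_congr fun n => by ring
  have hsp : Summable (fun n : ℕ => (b * kc a b n - b * kc (a+1) (b+1) n) * t ^ n) := by
    refine Summable.congr (((hse.mul_left b).sub (hsd.mul_left b))) fun n => by ring
  have h2 := tsum_shift (q := fun n => ((a+1)/(b+1)) * kc (a+2) (b+2) n - kc (a+1) (b+1) n)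
    hsp (by simp [kc_zero']) key
  beta_reduce at h2
  have h3 : ∑' n : ℕ, (((a+1)/(b+1)) * kc (a+2) (b+2) n - kc (a+1) (b+1) n) * t ^ n =
      ((a+1)/(b+1)) * KummerM (a+2) (b+2) t - KummerM (a+1) (b+1) t := by
    rw [kummer_eq ((a:ℝ)+2) (b+2), kummer_eq ((a:ℝ)+1) (b+1), ← tsum_mul_left,
      ← Summable.tsum_sub (hsf.mul_left (((a:ℝ)+1)/(b+1))) hsd]
    exact tsum_congr fun n => by ring
  rw [h3, ← h1] at h2
  linear_combination -h2

/-- Contiguous relation used for the derivative of the second solution prefactor. -/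
lemma deriv_id3 {a b : ℝ} (ha : ∀ n : ℕ, a + (n : ℝ) ≠ 0) (hb : ∀ n : ℕ, b + (n : ℝ) ≠ 0)
    (t : ℝ) :
    b * KummerM a b t - b * KummerM a (b+1) t =
      t * ((a/(b+1)) * KummerM (a+1) (b+2) t) := by
  have ha0 : a ≠ 0 := by simpa using ha 0
  have hb0 : b ≠ 0 := by simpa using hb 0
  have hb1 : b + 1 ≠ 0 := by simpa using shift_ne hb 0
  have hse := summable_kct ha hb t
  have hsd := summable_kct ha (shift_ne hb) t
  have hsf := summable_kct (shift_ne ha) (shift2_ne hb) t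
  have key : ∀ n : ℕ, (b * kc a b (n+1) - b * kc a (b+1) (n+1)) =
      (a/(b+1)) * kc (a+1) (b+2) n := by
    intro n
    have h1 := pe_ne_zero ha n
    have h2 := pe_ne_zero hb n
    have h3 : ((Nat.factorial n : ℕ) : ℝ) ≠ 0 := Nat.cast_ne_zero.2 n.factorial_ne_zero
    have h4 : ((n:ℝ) + 1) ≠ 0 := by positivity
    have h5 := ha n
    have h6 := hb n
    have h8 := shift_ne hb n
    simp only [kc, ascPochhammer_succ_eval, Nat.factorial_succ]
    rw [show (b:ℝ)+2 = (b+1)+1 by ring, pe_shift hb1 n, pe_shift ha0 n, pe_shift hb0 n]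
    push_cast
    field_simp
    ring
  have h1 : b * KummerM a b t - b * KummerM a (b+1) t =
      ∑' n : ℕ, (b * kc a b n - b * kc a (b+1) n) * t ^ n := by
    rw [kummer_eq a b, kummer_eq a (b+1), ← tsum_mul_left, ← tsum_mul_left,
      ← Summable.tsum_sub (hse.mul_left b) (hsd.mul_left b)]
    exact tsum_congr fun n => by ring
  have hsp : Summable (fun n : ℕ => (b * kc a b n - b * kc a (b+1) n) * t ^ n) := by
    refine Summable.congr (((hse.mul_left b).sub (hsd.mul_left b))) fun n => by ring
  have h2 := tsum_shift (q := fun n => (a/(b+1)) * kc (a+1) (b+2) n) hsp (by simp [kc_zero']) key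
  beta_reduce at h2
  have h3 : ∑' n : ℕ, ((a/(b+1)) * kc (a+1) (b+2) n) * t ^ n =
      (a/(b+1)) * KummerM (a+1) (b+2) t := by
    rw [kummer_eq ((a:ℝ)+1) (b+2), ← tsum_mul_left]
    exact tsum_congr fun n => by ring
  rw [h3, ← h1] at h2
  exact h2

/-- Contiguous relation used for the derivative of `m̂₁`. -/
lemma deriv_id4 {a b : ℝ} (ha : ∀ n : ℕ, a + (n : ℝ) ≠ 0) (hb : ∀ n : ℕ, b + (n : ℝ) ≠ 0)
    (t : ℝ) :
    (a/b) * KummerM (a+1) (b+1) t = KummerM a b t + ((a-b)/b) * KummerM a (b+1) t := by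
  have ha0 : a ≠ 0 := by simpa using ha 0
  have hb0 : b ≠ 0 := by simpa using hb 0
  have hse := summable_kct ha hb t
  have hsd := summable_kct ha (shift_ne hb) t
  have key : ∀ n : ℕ, (a/b) * kc (a+1) (b+1) n = kc a b n + ((a-b)/b) * kc a (b+1) n := by
    intro n
    have h1 := pe_ne_zero ha n
    have h2 := pe_ne_zero hb n
    have h3 : ((Nat.factorial n : ℕ) : ℝ) ≠ 0 := Nat.cast_ne_zero.2 n.factorial_ne_zero
    have h5 := ha n
    have h6 := hb n
    simp only [kc]
    rw [pe_shift ha0 n, pe_shift hb0 n]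
    field_simp
    ring
  rw [kummer_eq ((a:ℝ)+1) (b+1), kummer_eq a b, kummer_eq a ((b:ℝ)+1), ← tsum_mul_left,
    ← tsum_mul_left, ← Summable.tsum_add hse (hsd.mul_left (((a:ℝ)-b)/b))]
  exact tsum_congr fun n => by linear_combination (t ^ n) * key n

end KummerAux

open KummerAux

theorem initial_condition_bilattice
    (β γ τ : ℝ) (hβ0 : 0 < β) (hβ2 : β < 2) (hβ1 : β ≠ 1)
    (hγ : γ > max 0 (β - 1)) (hγ1 : γ ≠ 1) (hτ : 0 < τ)
    (m₀ m₁ mhat₀ mhat₁ btilde₀ vtilde₀ : ℝ → ℝ)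
    (hm₀ : ∀ t, m₀ t = KummerM γ β t)
    (hm₁ : ∀ t, m₁ t = (γ * t / β) * KummerM (γ + 1) (β + 1) t)
    (hmhat₀ : ∀ t, mhat₀ t =
      (Real.Gamma β * Real.Gamma (γ - β + 1) / (Real.Gamma γ * Real.Gamma (2 - β)))
        * t ^ (1 - β) * KummerM (γ - β + 1) (2 - β) t)
    (hmhat₁ : ∀ t, mhat₁ t =
      (Real.Gamma β * Real.Gamma (γ - β + 1) / (Real.Gamma γ * Real.Gamma (1 - β)))
        * t ^ (1 - β) * KummerM (γ - β + 1) (1 - β) t)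
    (hbtilde₀ : ∀ t, btilde₀ t = (m₁ t + τ * mhat₁ t) / (m₀ t + τ * mhat₀ t))
    (hvtilde₀ : ∀ t, vtilde₀ t = (γ - β + t - btilde₀ t) * t / (γ - 1)) :
    ∀ t > (0 : ℝ), m₀ t + τ * mhat₀ t ≠ 0 →
      DifferentiableAt ℝ vtilde₀ t ∧
      t ^ 2 * deriv vtilde₀ t =
        (γ - 1) * (vtilde₀ t) ^ 2 + t * (2 - t + β - 2 * γ) * vtilde₀ t + (γ - β) * t ^ 2 := by
  intro t ht hD
  have ht0 : t ≠ 0 := ne_of_gt ht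
  have hγ0 : (0:ℝ) < γ := lt_of_le_of_lt (le_max_left 0 (β - 1)) hγ
  have hγβ : β - 1 < γ := lt_of_le_of_lt (le_max_right 0 (β - 1)) hγ
  have hA0 : (0:ℝ) < γ - β + 1 := by linarith
  have hβne : β ≠ 0 := ne_of_gt hβ0
  have h1βne : (1:ℝ) - β ≠ 0 := sub_ne_zero.mpr (Ne.symm hβ1)
  have hfam : ∀ x : ℝ, 0 < x → ∀ n : ℕ, x + (n : ℝ) ≠ 0 := by
    intro x hx n
    positivity
  have hγf := hfam γ hγ0
  have hβf := hfam β hβ0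
  have hAf := hfam (γ - β + 1) hA0
  have h2βf := hfam (2 - β) (by linarith)
  have h1βf : ∀ n : ℕ, (1 - β) + (n : ℝ) ≠ 0 := by
    intro n
    match n with
    | 0 => simpa using h1βne
    | (m+1) =>
      have hpos : (0:ℝ) < 1 - β + ((m:ℝ)+1) := by
        have : (0:ℝ) ≤ (m:ℝ) := Nat.cast_nonneg m
        linarith
      push_cast
      linarith
  -- Gamma function relation
  have hΓ1β : Real.Gamma (1 - β) ≠ 0 := by
    apply Real.Gamma_ne_zero
    intro m
    match m with
    | 0 => simpa using h1βne
    | (k+1) =>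
      intro h
      have : (0:ℝ) ≤ (k:ℝ) := Nat.cast_nonneg k
      push_cast at h
      linarith
  have hΓγ : Real.Gamma γ ≠ 0 := (Real.Gamma_pos_of_pos hγ0).ne'
  have hKC : Real.Gamma β * Real.Gamma (γ - β + 1) / (Real.Gamma γ * Real.Gamma (1 - β))
      = (1 - β) * (Real.Gamma β * Real.Gamma (γ - β + 1) / (Real.Gamma γ * Real.Gamma (2 - β))) := by
    have h2 : Real.Gamma (2 - β) = (1 - β) * Real.Gamma (1 - β) := by
      rw [show (2:ℝ) - β = (1 - β) + 1 by ring, Real.Gamma_add_one h1βne]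
    rw [h2]
    field_simp
  set Cc : ℝ := Real.Gamma β * Real.Gamma (γ - β + 1) / (Real.Gamma γ * Real.Gamma (2 - β))
    with hCc
  -- rpow facts
  have hrp : t ^ ((1:ℝ) - β) = t ^ ((1:ℝ) - β - 1) * t := by
    nth_rewrite 1 [show (1:ℝ) - β = ((1:ℝ) - β - 1) + 1 by ring]
    rw [Real.rpow_add ht, Real.rpow_one]
  -- derivatives of the four building blocks
  have hdm₀ : HasDerivAt m₀ (γ / β * KummerM (γ+1) (β+1) t) t := by
    have hfun : m₀ = fun x => KummerM γ β x := funext hm₀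
    rw [hfun]
    exact hasDerivAt_kummerM hγf hβf t
  have hK1 : HasDerivAt (fun x => KummerM (γ+1) (β+1) x)
      ((γ+1)/(β+1) * KummerM (γ+2) (β+2) t) t := by
    have h := hasDerivAt_kummerM (shift_ne hγf) (shift_ne hβf) t
    rw [show (γ+1+1:ℝ) = γ+2 by ring, show (β+1+1:ℝ) = β+2 by ring] at h
    exact h
  have hdm₁ : HasDerivAt m₁ (γ/β * (1 * KummerM (γ+1) (β+1) t
      + t * ((γ+1)/(β+1) * KummerM (γ+2) (β+2) t))) t := by
    have hfun : m₁ = fun x => γ/β * (x * KummerM (γ+1) (β+1) x) :=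
      funext fun x => by rw [hm₁ x]; ring
    rw [hfun]
    exact ((hasDerivAt_id t).mul hK1).const_mul (γ/β)
  have hrpow : HasDerivAt (fun x : ℝ => x ^ ((1:ℝ) - β)) ((1 - β) * t ^ ((1:ℝ) - β - 1)) t :=
    Real.hasDerivAt_rpow_const (Or.inl ht0)
  have hKG : HasDerivAt (fun x => KummerM (γ-β+1) (2-β) x)
      ((γ-β+1)/(2-β) * KummerM (γ-β+2) (3-β) t) t := by
    have h := hasDerivAt_kummerM hAf h2βf t
    rw [show (γ-β+1+1:ℝ) = γ-β+2 by ring, show ((2:ℝ)-β)+1 = 3-β by ring] at h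
    exact h
  have hKH : HasDerivAt (fun x => KummerM (γ-β+1) (1-β) x)
      ((γ-β+1)/(1-β) * KummerM (γ-β+2) (2-β) t) t := by
    have h := hasDerivAt_kummerM hAf h1βf t
    rw [show (γ-β+1+1:ℝ) = γ-β+2 by ring, show ((1:ℝ)-β)+1 = 2-β by ring] at h
    exact h
  have hdh₀ : HasDerivAt mhat₀ (Cc * ((1 - β) * t ^ ((1:ℝ) - β - 1) * KummerM (γ-β+1) (2-β) t
      + t ^ ((1:ℝ) - β) * ((γ-β+1)/(2-β) * KummerM (γ-β+2) (3-β) t))) t := by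
    have hfun : mhat₀ = fun x => Cc * (x ^ ((1:ℝ) - β) * KummerM (γ-β+1) (2-β) x) :=
      funext fun x => by rw [hmhat₀ x]; ring
    rw [hfun]
    exact (hrpow.mul hKG).const_mul Cc
  have hdh₁ : HasDerivAt mhat₁ (((1-β) * Cc) * ((1 - β) * t ^ ((1:ℝ) - β - 1) * KummerM (γ-β+1) (1-β) t
      + t ^ ((1:ℝ) - β) * ((γ-β+1)/(1-β) * KummerM (γ-β+2) (2-β) t))) t := by
    have hfun : mhat₁ = fun x => ((1-β) * Cc) * (x ^ ((1:ℝ) - β) * KummerM (γ-β+1) (1-β) x) :=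
      funext fun x => by rw [hmhat₁ x, hKC]; ring
    rw [hfun]
    exact (hrpow.mul hKH).const_mul ((1-β) * Cc)
  -- identities
  have hode := ode_id hγf hβf t
  have hid3 := deriv_id3 hAf h1βf t
  rw [show ((1:ℝ)-β)+1 = 2-β by ring, show ((1:ℝ)-β)+2 = 3-β by ring,
    show (γ-β+1+1:ℝ) = γ-β+2 by ring] at hid3
  have hid4 := deriv_id4 hAf h1βf t
  rw [show ((1:ℝ)-β)+1 = 2-β by ring, show (γ-β+1+1:ℝ) = γ-β+2 by ring] at hid4
  have hβinv : β⁻¹ * β = 1 := inv_mul_cancel₀ hβne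
  have h1βinv : ((1:ℝ)-β)⁻¹ * (1-β) = 1 := inv_mul_cancel₀ h1βne
  -- derivative of the denominator D = m₀ + τ m̂₀
  have hdD : HasDerivAt (fun x => m₀ x + τ * mhat₀ x)
      ((m₁ t + τ * mhat₁ t) / t) t := by
    have h := hdm₀.add (hdh₀.const_mul τ)
    have hval : γ / β * KummerM (γ+1) (β+1) t
        + τ * (Cc * ((1 - β) * t ^ ((1:ℝ) - β - 1) * KummerM (γ-β+1) (2-β) t
          + t ^ ((1:ℝ) - β) * ((γ-β+1)/(2-β) * KummerM (γ-β+2) (3-β) t)))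
        = (m₁ t + τ * mhat₁ t) / t := by
      rw [eq_div_iff ht0, hm₁ t, hmhat₁ t, hKC, hrp]
      linear_combination (-(τ * Cc * (t ^ ((1:ℝ)-β-1)) * t)) * hid3
    rw [← hval]
    exact h
  -- derivative of the numerator N = m₁ + τ m̂₁
  have hdN : HasDerivAt (fun x => m₁ x + τ * mhat₁ x)
      (((1 + t - β) * (m₁ t + τ * mhat₁ t) + γ * t * (m₀ t + τ * mhat₀ t)) / t) t := by
    have h := hdm₁.add (hdh₁.const_mul τ)
    have hval : γ/β * (1 * KummerM (γ+1) (β+1) t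
        + t * ((γ+1)/(β+1) * KummerM (γ+2) (β+2) t))
        + τ * (((1-β) * Cc) * ((1 - β) * t ^ ((1:ℝ) - β - 1) * KummerM (γ-β+1) (1-β) t
          + t ^ ((1:ℝ) - β) * ((γ-β+1)/(1-β) * KummerM (γ-β+2) (2-β) t)))
        = ((1 + t - β) * (m₁ t + τ * mhat₁ t) + γ * t * (m₀ t + τ * mhat₀ t)) / t := by
      rw [eq_div_iff ht0, hm₀ t, hm₁ t, hmhat₀ t, hmhat₁ t, hKC, hrp]
      linear_combination ((γ/β) * t) * hode + (γ * t * (KummerM γ β t)) * hβinv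
        + (τ * (1-β) * Cc * (t ^ ((1:ℝ)-β-1)) * t^2) * hid4
        + (γ * τ * Cc * (t ^ ((1:ℝ)-β-1)) * t^2 * KummerM (γ-β+1) (2-β) t) * h1βinv
    rw [← hval]
    exact h
  -- derivative of b̃₀
  have hb : HasDerivAt btilde₀
      (((((1 + t - β) * (m₁ t + τ * mhat₁ t) + γ * t * (m₀ t + τ * mhat₀ t)) / t)
          * (m₀ t + τ * mhat₀ t)
        - (m₁ t + τ * mhat₁ t) * ((m₁ t + τ * mhat₁ t) / t))
        / (m₀ t + τ * mhat₀ t) ^ 2) t := by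
    have hfun : btilde₀ = fun x => (m₁ x + τ * mhat₁ x) / (m₀ x + τ * mhat₀ x) :=
      funext hbtilde₀
    rw [hfun]
    exact hdN.div hdD hD
  -- derivative of ṽ₀
  have hv : HasDerivAt vtilde₀
      (((0 + 1 - ((((1 + t - β) * (m₁ t + τ * mhat₁ t) + γ * t * (m₀ t + τ * mhat₀ t)) / t)
            * (m₀ t + τ * mhat₀ t)
          - (m₁ t + τ * mhat₁ t) * ((m₁ t + τ * mhat₁ t) / t))
          / (m₀ t + τ * mhat₀ t) ^ 2) * t
        + (γ - β + t - btilde₀ t) * 1) / (γ - 1)) t := by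
    have hfun : vtilde₀ = fun x => (γ - β + x - btilde₀ x) * x / (γ - 1) :=
      funext hvtilde₀
    rw [hfun]
    exact ((((hasDerivAt_const t (γ - β)).add (hasDerivAt_id t)).sub hb).mul
      (hasDerivAt_id t)).div_const (γ - 1)
  refine ⟨hv.differentiableAt, ?_⟩
  rw [hv.deriv, hvtilde₀ t, hbtilde₀ t]
  have hγ1' : γ - 1 ≠ 0 := sub_ne_zero.mpr hγ1
  field_simp
  ring
end
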